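/- Let Z be a finite type, and for each z, z' ∈ Z let A_{z}, B_{z'}, C_z, D_{z'} be events with joint probabilities satisfying P(A_z ∩ B_{z'}ᶜ ∩ C_z ∩ D_{z'}) well-defined. Suppose the events {C_z}_z partition a set of full counterfactual mass and likewise {D_{z'}}. Then Σ_z Σ_{z'} P(Y(t,z)=y, Y(t',z')=y') · P(Z(t)=z, Z(t')=z') ≤ Σ_z Σ_{z'} min(P(Y(t,z)=y), P(Y(t',z')=y')) · min(P(Z(t)=z), P(Z(t')=z')). In particular PNS ≤ Σ_z Σ_{z'} min(P(y|z,t), P(y'|z',t'))·min(P(z_t), P(z'_{t'})). -/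

import Mathlib

open MeasureTheory

lemma MeasureTheory.measureReal_inter_le_min {Ω : Type*} [MeasurableSpace Ω] (μ : Measure Ω)
    [IsFiniteMeasure μ] (s t : Set Ω) : μ.real (s ∩ t) ≤ min (μ.real s) (μ.real t) :=
  le_min (measureReal_mono Set.inter_subset_left) (measureReal_mono Set.inter_subset_right)

theorem stmt10_general {Ω : Type*} [MeasurableSpace Ω] (μ : Measure Ω) [IsProbabilityMeasure μ]
    {Z : Type*} [Fintype Z]
    (A B C D : Z → Set Ω) :
    ∑ z, ∑ z', (μ (A z ∩ B z')).toReal * (μ (C z ∩ D z')).toReal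
      ≤ ∑ z, ∑ z', min (μ (A z)).toReal (μ (B z')).toReal
          * min (μ (C z)).toReal (μ (D z')).toReal := by
  gcongr <;> exact measureReal_inter_le_min μ _ _

/-- Mediator bound on PNS. With events A z = {Y(t,z)=y},
B z' = {Y(t',z')=y'}, C z = {Z(t)=z}, D z' = {Z(t')=z'} over a finite mediator
value space Z:
Σ_z Σ_{z'} P(A z ∩ B z')·P(C z ∩ D z')
  ≤ Σ_z Σ_{z'} min(P(A z), P(B z'))·min(P(C z), P(D z')). -/
theorem stmt10 {Ω : Type*} [MeasurableSpace Ω] (μ : Measure Ω) [IsProbabilityMeasure μ]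
    {Z : Type*} [Fintype Z]
    (A B C D : Z → Set Ω)
    (hA : ∀ z, MeasurableSet (A z)) (hB : ∀ z, MeasurableSet (B z))
    (hC : ∀ z, MeasurableSet (C z)) (hD : ∀ z, MeasurableSet (D z)) :
    ∑ z, ∑ z', (μ (A z ∩ B z')).toReal * (μ (C z ∩ D z')).toReal
      ≤ ∑ z, ∑ z', min (μ (A z)).toReal (μ (B z')).toReal
          * min (μ (C z)).toReal (μ (D z')).toReal :=
  stmt10_general μ A B C D
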